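/- Strengthened invariance lemma used in the bisimulation theorem: suppose (M,s) and (N,t) are bisimilar via (Z,f) with (s,t) ∈ Z. Then for all interpretations i (of model variables into N_M), k (of model variables into N_N), and j (of formula variables), if for every (x, M') ∈ i there exists (x, N') ∈ k with (M', N') ∈ f((s,t)), and symmetrically for every (x, N') ∈ k there exists (x, M') ∈ i with (M', N') ∈ f((s,t)), then for every formula φ arising as an intermediate stage of evaluating an FOMC-sentence: s ∈ ⟦φ⟧^M_{i,j} iff t ∈ ⟦φ⟧^N_{k,j}. -/
import Mathlib


set_option linter.unusedVariables false

/-! Genealogical Kripke models and first-order modal ξ-calculus (FOMC). -/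

/-- A genealogical Kripke model over a fixed type `W` of possible worlds,
propositional letters `P` and constant symbols `C`.  The children models are
given by an index type `ι` with a family `child : ι → GKM W P C`. -/
inductive GKM (W P C : Type) : Type 1 where
  | mk (S : Set W) (Sne : S.Nonempty) (R : W → W → Prop) (V : P → Set W)
      (ι : Type) (child : ι → GKM W P C)
      (I : W → C → Option ι) (T : W → ι → W) : GKM W P C

namespace GKM

variable {W P C : Type}

def S : GKM W P C → Set W
  | .mk S _ _ _ _ _ _ _ => S

def R : GKM W P C → W → W → Prop
  | .mk _ _ R _ _ _ _ _ => R

def V : GKM W P C → P → Set W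
  | .mk _ _ _ V _ _ _ _ => V

/-- The index type of the set of children models. -/
def Idx : GKM W P C → Type
  | .mk _ _ _ _ ι _ _ _ => ι

def child : (M : GKM W P C) → M.Idx → GKM W P C
  | .mk _ _ _ _ _ c _ _ => c

def I : (M : GKM W P C) → W → C → Option M.Idx
  | .mk _ _ _ _ _ _ I _ => I

def T : (M : GKM W P C) → W → M.Idx → W
  | .mk _ _ _ _ _ _ _ T => T

/-- `IsChild M' M` : `M'` is a member of the set `N_M` of children models of `M`. -/
def IsChild (M' M : GKM W P C) : Prop := ∃ a, M.child a = M'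

theorem acc_isChild (M : GKM W P C) : Acc IsChild M := by
  induction M with
  | mk S ne R V ι c I T ih =>
    refine Acc.intro _ fun M' h => ?_
    obtain ⟨a, ha⟩ := h
    subst ha
    exact ih a

theorem isChild_wf : WellFounded (@IsChild W P C) := ⟨acc_isChild⟩

instance : WellFoundedRelation (GKM W P C) :=
  ⟨Relation.TransGen IsChild, isChild_wf.transGen⟩

/-- Hereditary well-formedness: `R ⊆ S × S` and `T(s,N') ∈ S_{N'}`, recursively. -/
def WF (M : GKM W P C) : Prop :=
  (∀ u u', M.R u u' → u ∈ M.S ∧ u' ∈ M.S) ∧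
  (∀ s ∈ M.S, ∀ a : M.Idx, M.T s a ∈ (M.child a).S) ∧
  (∀ a : M.Idx, WF (M.child a))
termination_by M
decreasing_by exact Relation.TransGen.single ⟨_, rfl⟩

/-- Finitely many children, hereditarily. -/
def ChildFin (M : GKM W P C) : Prop :=
  Finite M.Idx ∧ ∀ a : M.Idx, ChildFin (M.child a)
termination_by M
decreasing_by exact Relation.TransGen.single ⟨_, rfl⟩

/-- Image-finite genealogical Kripke model. -/
def ImageFinite (M : GKM W P C) : Prop :=
  (∀ s ∈ M.S, {t | M.R s t}.Finite) ∧ Finite M.Idx ∧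
    ∀ a : M.Idx, ImageFinite (M.child a)
termination_by M
decreasing_by exact Relation.TransGen.single ⟨_, rfl⟩

end GKM

/-- Formulas of first-order modal ξ-calculus.  Model variables and formula
variables are both encoded as natural numbers (in separate namespaces).
`qmv φ x` is `¿φ?x`, `qmc φ c` is `¿φ?c`, `all x φ` is `∀x.φ` and
`xi X φ` is `ξX.φ`. -/
inductive Fm (P C : Type) : Type where
  | fvar : ℕ → Fm P C
  | top : Fm P C
  | prop : P → Fm P C
  | qmv : Fm P C → ℕ → Fm P C
  | qmc : Fm P C → C → Fm P C
  | neg : Fm P C → Fm P C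
  | and : Fm P C → Fm P C → Fm P C
  | box : Fm P C → Fm P C
  | all : ℕ → Fm P C → Fm P C
  | xi : ℕ → Fm P C → Fm P C

namespace Fm

variable {P C : Type}

/-- `∃x.φ := ¬∀x.¬φ`. -/
def exi (x : ℕ) (φ : Fm P C) : Fm P C := .neg (.all x (.neg φ))

/-- `◇φ := ¬□¬φ`. -/
def dia (φ : Fm P C) : Fm P C := .neg (.box (.neg φ))

/-- Free model variables. -/
def fmv : Fm P C → Finset ℕ
  | .fvar _ => ∅
  | .top => ∅
  | .prop _ => ∅
  | .qmv φ x => fmv φ ∪ {x}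
  | .qmc φ _ => fmv φ
  | .neg φ => fmv φ
  | .and φ ψ => fmv φ ∪ fmv ψ
  | .box φ => fmv φ
  | .all x φ => fmv φ \ {x}
  | .xi _ φ => fmv φ

/-- Formula variables with a free occurrence *outside* every `¿ ?` pair.
Such occurrences are never bound by `ξ`. -/
def ffvOut : Fm P C → Finset ℕ
  | .fvar X => {X}
  | .top => ∅
  | .prop _ => ∅
  | .qmv _ _ => ∅
  | .qmc _ _ => ∅
  | .neg φ => ffvOut φ
  | .and φ ψ => ffvOut φ ∪ ffvOut ψ
  | .box φ => ffvOut φ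
  | .all _ φ => ffvOut φ
  | .xi _ φ => ffvOut φ

/-- Formula variables with a free occurrence *inside* some `¿ ?` pair
(these are the occurrences a surrounding `ξX.` can bind). -/
def ffvIn : Fm P C → Finset ℕ
  | .fvar _ => ∅
  | .top => ∅
  | .prop _ => ∅
  | .qmv φ _ => ffvOut φ ∪ ffvIn φ
  | .qmc φ _ => ffvOut φ ∪ ffvIn φ
  | .neg φ => ffvIn φ
  | .and φ ψ => ffvIn φ ∪ ffvIn ψ
  | .box φ => ffvIn φ
  | .all _ φ => ffvIn φ
  | .xi X φ => ffvIn φ \ {X}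

/-- Free formula variables. -/
def ffv (φ : Fm P C) : Finset ℕ := ffvOut φ ∪ ffvIn φ

/-- The extra subformula conditions of Definition 2.3. -/
def Good : Fm P C → Prop
  | .fvar _ => True
  | .top => True
  | .prop _ => True
  | .qmv φ _ => fmv φ = ∅ ∧ Good φ
  | .qmc φ _ => fmv φ = ∅ ∧ Good φ
  | .neg φ => Good φ
  | .and φ ψ => Good φ ∧ Good ψ
  | .box φ => Good φ
  | .all _ φ => Good φ
  | .xi X φ => fmv (Fm.xi X φ) = ∅ ∧ ffv (Fm.xi X φ) = ∅ ∧ Good φ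

/-- FOMC-sentences (Definition 2.3). -/
def IsSentence (φ : Fm P C) : Prop := fmv φ = ∅ ∧ ffv φ = ∅ ∧ Good φ

end Fm

namespace GKM

variable {W P C : Type}

mutual

/-- Semantics (Definition 2.11).  `i` interprets model variables as children
models of the current model (via their indices), and `j` interprets formula
variables semantically, as maps assigning to each genealogical Kripke model a
set of worlds. -/
def eval : (φ : Fm P C) → (M : GKM W P C) → (ℕ → Option M.Idx) →
    (ℕ → Option (GKM W P C → Set W)) → Set W
  | .fvar X, M, _, j => M.S ∩ ((j X).elim ∅ fun F => F M)
  | .top, M, _, _ => M.S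
  | .prop p, M, _, _ => M.S ∩ M.V p
  | .qmv φ x, M, i, j =>
      {s | s ∈ M.S ∧ ∃ a, i x = some a ∧
        M.T s a ∈ eval φ (M.child a) (fun _ => none) j}
  | .qmc φ c, M, _, j =>
      {s | s ∈ M.S ∧ ∃ a, M.I s c = some a ∧
        M.T s a ∈ eval φ (M.child a) (fun _ => none) j}
  | .neg φ, M, i, j => M.S \ eval φ M i j
  | .and φ ψ, M, i, j => eval φ M i j ∩ eval ψ M i j
  | .box φ, M, i, j => {s | s ∈ M.S ∧ ∀ t, M.R s t → t ∈ eval φ M i j}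
  | .all x φ, M, i, j =>
      {s | s ∈ M.S ∧ ∀ a : M.Idx, s ∈ eval φ M (Function.update i x (some a)) j}
  | .xi X φ, M, i, j => eval φ M i (Function.update j X (some (fun N => xiClosure φ X j N)))
  termination_by φ M i j => (sizeOf φ, 1)

/-- The semantic value bound to `X` by `ξX.φ` under environment `j`: the
(depth-guarded) fixed point `F` with `F N = ⟦φ⟧^N_{∅, j[X:=F]}`. -/
def xiClosure (φ : Fm P C) (X : ℕ) (j : ℕ → Option (GKM W P C → Set W))
    (N₀ : GKM W P C) : Set W :=
  WellFounded.fix (isChild_wf.transGen)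
    (fun N rec =>
      eval φ N (fun _ => none) (Function.update j X (some fun N' =>
        @dite (Set W) (Relation.TransGen IsChild N' N) (Classical.dec _)
          (fun h => rec N' h) (fun _ => ∅))))
    N₀
  termination_by (sizeOf φ, 2)

end

/-- `M,s ⊨ φ` : truth of the FOMC-sentence `φ` at the pointed model `M,s`. -/
def Sat (M : GKM W P C) (s : W) (φ : Fm P C) : Prop :=
  s ∈ eval φ M (fun _ => none) (fun _ => none)

/-- Environments arising from binding sentences `ξX.ψ` (used for the
intermediate stages of evaluating an FOMC-sentence). -/
inductive GoodEnv : (ℕ → Option (GKM W P C → Set W)) → Prop where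
  | nil : GoodEnv (fun _ => none)
  | cons {j : ℕ → Option (GKM W P C → Set W)} {X : ℕ} {ψ : Fm P C} :
      GoodEnv j → (Fm.xi X ψ).IsSentence →
      GoodEnv (Function.update j X (some (xiClosure ψ X j)))

/-- Bisimilarity of pointed genealogical Kripke models (Definition 4.2). -/
def Bisim (M : GKM W P C) (s : W) (N : GKM W P C) (t : W) : Prop :=
  ∃ (Z : W → W → Prop) (f : W → W → M.Idx → N.Idx → Prop),
    Z s t ∧
    (∀ u v, Z u v → u ∈ M.S ∧ v ∈ N.S) ∧
    (∀ u v, Z u v → ∀ p : P, u ∈ M.V p ↔ v ∈ N.V p) ∧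
    (∀ u v, Z u v → ∀ a : M.Idx, ∃ b : N.Idx, f u v a b) ∧
    (∀ u v, Z u v → ∀ b : N.Idx, ∃ a : M.Idx, f u v a b) ∧
    (∀ u v, Z u v → ∀ a b, f u v a b →
      Bisim (M.child a) (M.T u a) (N.child b) (N.T v b)) ∧
    (∀ u v, Z u v → ∀ c : C,
      (M.I u c = none ∧ N.I v c = none) ∨
      (∃ a b, M.I u c = some a ∧ N.I v c = some b ∧
        Bisim (M.child a) (M.T u a) (N.child b) (N.T v b))) ∧
    (∀ u v, Z u v → ∀ u', M.R u u' →
      ∃ v', N.R v v' ∧ Z u' v' ∧ ∀ a b, f u v a b → f u' v' a b) ∧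
    (∀ u v, Z u v → ∀ v', N.R v v' →
      ∃ u', M.R u u' ∧ Z u' v' ∧ ∀ a b, f u v a b → f u' v' a b)
termination_by M
decreasing_by all_goals exact Relation.TransGen.single ⟨_, rfl⟩

/-- The conditions of Definition 4.2 for a specific pair `(Z, f)` of witnesses. -/
def IsBisim (M N : GKM W P C) (Z : W → W → Prop)
    (f : W → W → M.Idx → N.Idx → Prop) : Prop :=
  (∀ u v, Z u v → u ∈ M.S ∧ v ∈ N.S) ∧
  (∀ u v, Z u v → ∀ p : P, u ∈ M.V p ↔ v ∈ N.V p) ∧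
  (∀ u v, Z u v → ∀ a : M.Idx, ∃ b : N.Idx, f u v a b) ∧
  (∀ u v, Z u v → ∀ b : N.Idx, ∃ a : M.Idx, f u v a b) ∧
  (∀ u v, Z u v → ∀ a b, f u v a b →
    Bisim (M.child a) (M.T u a) (N.child b) (N.T v b)) ∧
  (∀ u v, Z u v → ∀ c : C,
    (M.I u c = none ∧ N.I v c = none) ∨
    (∃ a b, M.I u c = some a ∧ N.I v c = some b ∧
      Bisim (M.child a) (M.T u a) (N.child b) (N.T v b))) ∧
  (∀ u v, Z u v → ∀ u', M.R u u' →
    ∃ v', N.R v v' ∧ Z u' v' ∧ ∀ a b, f u v a b → f u' v' a b) ∧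
  (∀ u v, Z u v → ∀ v', N.R v v' →
    ∃ u', M.R u u' ∧ Z u' v' ∧ ∀ a b, f u v a b → f u' v' a b)

/-- `n`-fold relational composition. -/
def relPow (r : W → W → Prop) : ℕ → W → W → Prop
  | 0 => fun a b => a = b
  | n + 1 => fun a c => ∃ b, relPow r n a b ∧ r b c

/-- Standard Kripke semantics on the frame `(S_M, R_M)` with valuation `V_M`
(meaningful for pure propositional modal formulas). -/
def kEval (M : GKM W P C) : Fm P C → Set W
  | .top => M.S
  | .prop p => M.S ∩ M.V p
  | .neg φ => M.S \ kEval M φ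
  | .and φ ψ => kEval M φ ∩ kEval M ψ
  | .box φ => {s | s ∈ M.S ∧ ∀ t, M.R s t → t ∈ kEval M φ}
  | _ => ∅

end GKM

/-- Pure propositional modal formulas. -/
def Fm.Pure {P C : Type} : Fm P C → Prop
  | .top => True
  | .prop _ => True
  | .neg φ => Pure φ
  | .and φ ψ => Pure φ ∧ Pure ψ
  | .box φ => Pure φ
  | _ => False


/-! ### Auxiliary development for statement 11 -/

namespace GKM

variable {W P C : Type}

/-- Value of an optional semantic assignment at a model. -/
def oval (o : Option (GKM W P C → Set W)) (M : GKM W P C) : Set W :=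
  o.elim ∅ fun F => F M

theorem not_transGen_isChild_self (M : GKM W P C) :
    ¬ Relation.TransGen IsChild M M :=
  fun h => (isChild_wf.transGen).asymmetric M M h h

theorem bisim_iff {M N : GKM W P C} {s t : W} :
    Bisim M s N t ↔ ∃ Z f, Z s t ∧ IsBisim M N Z f := by
  rw [GKM.Bisim.eq_def]; exact Iff.rfl

/-- Simultaneous descent to children in two models. -/
def SyncStep (p q : GKM W P C × GKM W P C) : Prop :=
  IsChild q.1 p.1 ∧ IsChild q.2 p.2

theorem syncReach_cases {p q : GKM W P C × GKM W P C}
    (h : Relation.ReflTransGen SyncStep p q) :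
    q = p ∨ (Relation.TransGen IsChild q.1 p.1 ∧ Relation.TransGen IsChild q.2 p.2) := by
  induction h with
  | refl => exact Or.inl rfl
  | @tail b c hpb hbc ih =>
    right
    rcases ih with h | ⟨h1, h2⟩
    · subst h
      exact ⟨Relation.TransGen.single hbc.1, Relation.TransGen.single hbc.2⟩
    · exact ⟨Relation.TransGen.head' hbc.1 h1.to_reflTransGen,
        Relation.TransGen.head' hbc.2 h2.to_reflTransGen⟩

/-! Unfolding lemmas for `eval`. -/

variable {M : GKM W P C} {i : ℕ → Option M.Idx} {j : ℕ → Option (GKM W P C → Set W)}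

theorem eval_fvar (X : ℕ) :
    eval (Fm.fvar X) M i j = M.S ∩ oval (j X) M := by rw [GKM.eval.eq_def]; rfl

theorem eval_top : eval (Fm.top) M i j = M.S := by rw [GKM.eval.eq_def]

theorem eval_prop (p : P) : eval (Fm.prop p) M i j = M.S ∩ M.V p := by rw [GKM.eval.eq_def]

theorem eval_qmv (φ : Fm P C) (x : ℕ) :
    eval (Fm.qmv φ x) M i j =
      {s | s ∈ M.S ∧ ∃ a, i x = some a ∧
        M.T s a ∈ eval φ (M.child a) (fun _ => none) j} := by rw [GKM.eval.eq_def]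

theorem eval_qmc (φ : Fm P C) (c : C) :
    eval (Fm.qmc φ c) M i j =
      {s | s ∈ M.S ∧ ∃ a, M.I s c = some a ∧
        M.T s a ∈ eval φ (M.child a) (fun _ => none) j} := by rw [GKM.eval.eq_def]

theorem eval_neg (φ : Fm P C) :
    eval (Fm.neg φ) M i j = M.S \ eval φ M i j := by rw [GKM.eval.eq_def]

theorem eval_and (φ ψ : Fm P C) :
    eval (Fm.and φ ψ) M i j = eval φ M i j ∩ eval ψ M i j := by rw [GKM.eval.eq_def]

theorem eval_box (φ : Fm P C) :
    eval (Fm.box φ) M i j = {s | s ∈ M.S ∧ ∀ t, M.R s t → t ∈ eval φ M i j} := by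
  rw [GKM.eval.eq_def]

theorem eval_all (x : ℕ) (φ : Fm P C) :
    eval (Fm.all x φ) M i j =
      {s | s ∈ M.S ∧ ∀ a : M.Idx, s ∈ eval φ M (Function.update i x (some a)) j} := by
  rw [GKM.eval.eq_def]

theorem eval_xi (X : ℕ) (φ : Fm P C) :
    eval (Fm.xi X φ) M i j =
      eval φ M i (Function.update j X (some fun N => xiClosure φ X j N)) := by
  rw [GKM.eval.eq_def]

theorem xiClosure_eq (φ : Fm P C) (X : ℕ) (j : ℕ → Option (GKM W P C → Set W))
    (N : GKM W P C) :
    GKM.xiClosure φ X j N = GKM.eval φ N (fun _ => none)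
      (Function.update j X (some fun N' =>
        @dite (Set W) (Relation.TransGen IsChild N' N) (Classical.dec _)
          (fun _ => GKM.xiClosure φ X j N') (fun _ => ∅))) := by
  conv_lhs => rw [GKM.xiClosure.eq_def, WellFounded.fix_eq]
  have henv : ∀ N' : GKM W P C,
      (@dite (Set W) (Relation.TransGen IsChild N' N) (Classical.dec _)
        (fun h => (isChild_wf.transGen).fix
          (fun N rec => GKM.eval φ N (fun _ => none)
            (Function.update j X (some fun N' =>
              @dite (Set W) (Relation.TransGen IsChild N' N) (Classical.dec _)
                (fun h => rec N' h) (fun _ => ∅)))) N')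
        (fun _ => ∅)) =
      (@dite (Set W) (Relation.TransGen IsChild N' N) (Classical.dec _)
        (fun _ => GKM.xiClosure φ X j N') (fun _ => ∅)) := by
    intro N'
    by_cases hd : Relation.TransGen IsChild N' N
    · rw [dif_pos hd, dif_pos hd, GKM.xiClosure.eq_def]
    · rw [dif_neg hd, dif_neg hd]
  simp only [henv]

/-! Free-variable bookkeeping. -/

theorem ffv_of_xi_closed {X : ℕ} {φ : Fm P C} (h : (Fm.xi X φ).ffv = ∅) :
    φ.ffv ⊆ {X} := by
  simp only [Fm.ffv, Fm.ffvOut, Fm.ffvIn, Finset.union_eq_empty] at h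
  intro Y hY
  simp only [Fm.ffv, Finset.mem_union] at hY
  rcases hY with hY | hY
  · rw [h.1] at hY; exact absurd hY (Finset.notMem_empty Y)
  · by_contra hne
    have : Y ∈ φ.ffvIn \ {X} := Finset.mem_sdiff.mpr ⟨hY, hne⟩
    rw [h.2] at this; exact absurd this (Finset.notMem_empty Y)

mutual

/-- The main invariance lemma, with two environments related on the free
formula variables of `φ` at all synchronously reachable bisimilar pairs. -/
theorem invar (φ : Fm P C) (hG : φ.Good)
    (M N : GKM W P C) (Z : W → W → Prop) (f : W → W → M.Idx → N.Idx → Prop)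
    (h : IsBisim M N Z f) (s t : W) (hst : Z s t)
    (i : ℕ → Option M.Idx) (k : ℕ → Option N.Idx)
    (j1 j2 : ℕ → Option (GKM W P C → Set W))
    (hik : ∀ x a, i x = some a → ∃ b, k x = some b ∧ f s t a b)
    (hki : ∀ x b, k x = some b → ∃ a, i x = some a ∧ f s t a b)
    (HJ : ∀ X ∈ φ.ffv, ∀ M' N' : GKM W P C,
      Relation.ReflTransGen SyncStep (M, N) (M', N') →
      ∀ s' t', Bisim M' s' N' t' → (s' ∈ oval (j1 X) M' ↔ t' ∈ oval (j2 X) N')) :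
    (s ∈ eval φ M i j1 ↔ t ∈ eval φ N k j2) := by
  obtain ⟨hS, hV, hfab, hfba, hch, hI, hforth, hback⟩ := h
  have hs : s ∈ M.S := (hS s t hst).1
  have ht : t ∈ N.S := (hS s t hst).2
  cases φ with
  | fvar X =>
    rw [eval_fvar, eval_fvar]
    have hX : X ∈ (Fm.fvar X : Fm P C).ffv := by
      simp [Fm.ffv, Fm.ffvOut, Fm.ffvIn]
    have hb : Bisim M s N t := bisim_iff.mpr
      ⟨Z, f, hst, hS, hV, hfab, hfba, hch, hI, hforth, hback⟩
    have := HJ X hX M N Relation.ReflTransGen.refl s t hb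
    constructor
    · rintro ⟨-, hv⟩; exact ⟨ht, this.mp hv⟩
    · rintro ⟨-, hv⟩; exact ⟨hs, this.mpr hv⟩
  | top => rw [eval_top, eval_top]; exact ⟨fun _ => ht, fun _ => hs⟩
  | prop p =>
    rw [eval_prop, eval_prop]
    constructor
    · rintro ⟨-, hv⟩; exact ⟨ht, (hV s t hst p).mp hv⟩
    · rintro ⟨-, hv⟩; exact ⟨hs, (hV s t hst p).mpr hv⟩
  | qmv φ x =>
    obtain ⟨-, hGφ⟩ := hG
    rw [eval_qmv, eval_qmv]
    simp only [Set.mem_setOf_eq]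
    have hffv : ∀ X ∈ φ.ffv, X ∈ (Fm.qmv φ x).ffv := by
      intro X hX
      simp only [Fm.ffv, Fm.ffvOut, Fm.ffvIn, Finset.mem_union, Finset.notMem_empty,
        false_or] at hX ⊢
      tauto
    constructor
    · rintro ⟨-, a, hia, hmem⟩
      obtain ⟨b, hkb, hf⟩ := hik x a hia
      obtain ⟨Z', f', hst', h'⟩ := bisim_iff.mp (hch s t hst a b hf)
      refine ⟨ht, b, hkb, ?_⟩
      refine (invar φ hGφ (M.child a) (N.child b) Z' f' h' _ _ hst'
        (fun _ => none) (fun _ => none) j1 j2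
        (fun _ _ hx => by cases hx) (fun _ _ hx => by cases hx) ?_).mp hmem
      intro X hX M' N' hreach s' t' hb
      exact HJ X (hffv X hX) M' N'
        (Relation.ReflTransGen.head ⟨⟨a, rfl⟩, ⟨b, rfl⟩⟩ hreach) s' t' hb
    · rintro ⟨-, b, hkb, hmem⟩
      obtain ⟨a, hia, hf⟩ := hki x b hkb
      obtain ⟨Z', f', hst', h'⟩ := bisim_iff.mp (hch s t hst a b hf)
      refine ⟨hs, a, hia, ?_⟩
      refine (invar φ hGφ (M.child a) (N.child b) Z' f' h' _ _ hst'
        (fun _ => none) (fun _ => none) j1 j2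
        (fun _ _ hx => by cases hx) (fun _ _ hx => by cases hx) ?_).mpr hmem
      intro X hX M' N' hreach s' t' hb
      exact HJ X (hffv X hX) M' N'
        (Relation.ReflTransGen.head ⟨⟨a, rfl⟩, ⟨b, rfl⟩⟩ hreach) s' t' hb
  | qmc φ c =>
    obtain ⟨-, hGφ⟩ := hG
    rw [eval_qmc, eval_qmc]
    simp only [Set.mem_setOf_eq]
    have hffv : ∀ X ∈ φ.ffv, X ∈ (Fm.qmc φ c).ffv := by
      intro X hX
      simp only [Fm.ffv, Fm.ffvOut, Fm.ffvIn, Finset.mem_union, Finset.notMem_empty,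
        false_or] at hX ⊢
      tauto
    rcases hI s t hst c with ⟨hMn, hNn⟩ | ⟨a, b, hMa, hNb, hb⟩
    · constructor
      · rintro ⟨-, a, ha, -⟩; rw [hMn] at ha; cases ha
      · rintro ⟨-, b, hb', -⟩; rw [hNn] at hb'; cases hb'
    · obtain ⟨Z', f', hst', h'⟩ := bisim_iff.mp hb
      have key : (M.T s a ∈ eval φ (M.child a) (fun _ => none) j1 ↔
          N.T t b ∈ eval φ (N.child b) (fun _ => none) j2) := by
        refine invar φ hGφ (M.child a) (N.child b) Z' f' h' _ _ hst'
          (fun _ => none) (fun _ => none) j1 j2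
          (fun _ _ hx => by cases hx) (fun _ _ hx => by cases hx) ?_
        intro X hX M' N' hreach s' t' hb'
        exact HJ X (hffv X hX) M' N'
          (Relation.ReflTransGen.head ⟨⟨a, rfl⟩, ⟨b, rfl⟩⟩ hreach) s' t' hb'
      constructor
      · rintro ⟨-, a', ha', hmem⟩
        rw [hMa] at ha'; injection ha' with ha'; subst ha'
        exact ⟨ht, b, hNb, key.mp hmem⟩
      · rintro ⟨-, b', hb'', hmem⟩
        rw [hNb] at hb''; injection hb'' with hb''; subst hb''
        exact ⟨hs, a, hMa, key.mpr hmem⟩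
  | neg φ =>
    rw [eval_neg, eval_neg]
    have IH := invar φ hG M N Z f
      ⟨hS, hV, hfab, hfba, hch, hI, hforth, hback⟩ s t hst i k j1 j2 hik hki
      (by
        intro X hX
        exact HJ X (by simpa [Fm.ffv, Fm.ffvOut, Fm.ffvIn] using hX))
    constructor
    · rintro ⟨-, hv⟩; exact ⟨ht, fun hc => hv (IH.mpr hc)⟩
    · rintro ⟨-, hv⟩; exact ⟨hs, fun hc => hv (IH.mp hc)⟩
  | and φ ψ =>
    obtain ⟨hG1, hG2⟩ := hG
    rw [eval_and, eval_and]
    have IH1 := invar φ hG1 M N Z f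
      ⟨hS, hV, hfab, hfba, hch, hI, hforth, hback⟩ s t hst i k j1 j2 hik hki
      (by
        intro X hX
        refine HJ X ?_
        simp only [Fm.ffv, Fm.ffvOut, Fm.ffvIn, Finset.mem_union] at hX ⊢
        tauto)
    have IH2 := invar ψ hG2 M N Z f
      ⟨hS, hV, hfab, hfba, hch, hI, hforth, hback⟩ s t hst i k j1 j2 hik hki
      (by
        intro X hX
        refine HJ X ?_
        simp only [Fm.ffv, Fm.ffvOut, Fm.ffvIn, Finset.mem_union] at hX ⊢
        tauto)
    constructor
    · rintro ⟨h1, h2⟩; exact ⟨IH1.mp h1, IH2.mp h2⟩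
    · rintro ⟨h1, h2⟩; exact ⟨IH1.mpr h1, IH2.mpr h2⟩
  | box φ =>
    rw [eval_box, eval_box]
    simp only [Set.mem_setOf_eq]
    have hffv : ∀ X ∈ φ.ffv, X ∈ (Fm.box φ).ffv := by
      intro X hX; simpa [Fm.ffv, Fm.ffvOut, Fm.ffvIn] using hX
    constructor
    · rintro ⟨-, hall⟩
      refine ⟨ht, fun v hRv => ?_⟩
      obtain ⟨u, hRu, hZ, hsub⟩ := hback s t hst v hRv
      have IH := invar φ hG M N Z f
        ⟨hS, hV, hfab, hfba, hch, hI, hforth, hback⟩ u v hZ i k j1 j2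
        (fun x a hx => by obtain ⟨b, hb, hf⟩ := hik x a hx; exact ⟨b, hb, hsub a b hf⟩)
        (fun x b hx => by obtain ⟨a, ha, hf⟩ := hki x b hx; exact ⟨a, ha, hsub a b hf⟩)
        (fun X hX => HJ X (hffv X hX))
      exact IH.mp (hall u hRu)
    · rintro ⟨-, hall⟩
      refine ⟨hs, fun u hRu => ?_⟩
      obtain ⟨v, hRv, hZ, hsub⟩ := hforth s t hst u hRu
      have IH := invar φ hG M N Z f
        ⟨hS, hV, hfab, hfba, hch, hI, hforth, hback⟩ u v hZ i k j1 j2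
        (fun x a hx => by obtain ⟨b, hb, hf⟩ := hik x a hx; exact ⟨b, hb, hsub a b hf⟩)
        (fun x b hx => by obtain ⟨a, ha, hf⟩ := hki x b hx; exact ⟨a, ha, hsub a b hf⟩)
        (fun X hX => HJ X (hffv X hX))
      exact IH.mpr (hall v hRv)
  | all x φ =>
    rw [eval_all, eval_all]
    simp only [Set.mem_setOf_eq]
    have hffv : ∀ X ∈ φ.ffv, X ∈ (Fm.all x φ).ffv := by
      intro X hX; simpa [Fm.ffv, Fm.ffvOut, Fm.ffvIn] using hX
    have key : ∀ a b, f s t a b →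
        (s ∈ eval φ M (Function.update i x (some a)) j1 ↔
         t ∈ eval φ N (Function.update k x (some b)) j2) := by
      intro a b hf
      refine invar φ hG M N Z f
        ⟨hS, hV, hfab, hfba, hch, hI, hforth, hback⟩ s t hst _ _ j1 j2 ?_ ?_
        (fun X hX => HJ X (hffv X hX))
      · intro y a' hy
        by_cases hyx : y = x
        · subst hyx
          rw [Function.update_self] at hy; injection hy with hy; subst hy
          exact ⟨b, Function.update_self .., hf⟩
        · rw [Function.update_of_ne hyx] at hy
          obtain ⟨b', hb', hf'⟩ := hik y a' hy
          exact ⟨b', by rw [Function.update_of_ne hyx]; exact hb', hf'⟩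
      · intro y b' hy
        by_cases hyx : y = x
        · subst hyx
          rw [Function.update_self] at hy; injection hy with hy; subst hy
          exact ⟨a, Function.update_self .., hf⟩
        · rw [Function.update_of_ne hyx] at hy
          obtain ⟨a', ha', hf'⟩ := hki y b' hy
          exact ⟨a', by rw [Function.update_of_ne hyx]; exact ha', hf'⟩
    constructor
    · rintro ⟨-, hall⟩
      refine ⟨ht, fun b => ?_⟩
      obtain ⟨a, hf⟩ := hfba s t hst b
      exact (key a b hf).mp (hall a)
    · rintro ⟨-, hall⟩
      refine ⟨hs, fun a => ?_⟩
      obtain ⟨b, hf⟩ := hfab s t hst a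
      exact (key a b hf).mpr (hall b)
  | xi X φ =>
    obtain ⟨-, hffvc, hGφ⟩ := hG
    have hsub : φ.ffv ⊆ {X} := ffv_of_xi_closed hffvc
    rw [eval_xi, eval_xi]
    refine invar φ hGφ M N Z f
      ⟨hS, hV, hfab, hfba, hch, hI, hforth, hback⟩ s t hst i k _ _ hik hki ?_
    intro X' hX' M' N' hreach s' t' hb
    have hXX : X' = X := Finset.mem_singleton.mp (hsub hX')
    subst hXX
    simp only [Function.update_self, oval, Option.elim]
    exact xiRel φ X' hGφ hsub j1 j2 M' N' s' t' hb
termination_by (sizeOf φ, 0, M)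

/-- Invariance of the depth-guarded fixed point `xiClosure` for closed
binding formulas, across bisimilar pointed models and arbitrary ambient
environments. -/
theorem xiRel (φ : Fm P C) (X : ℕ) (hG : φ.Good) (hsub : φ.ffv ⊆ {X})
    (j1 j2 : ℕ → Option (GKM W P C → Set W)) (M' N' : GKM W P C) :
    ∀ s' t', Bisim M' s' N' t' →
      (s' ∈ xiClosure φ X j1 M' ↔ t' ∈ xiClosure φ X j2 N') := by
  intro s' t' hb
  obtain ⟨Z', f', hst', h'⟩ := bisim_iff.mp hb
  rw [xiClosure_eq φ X j1 M', xiClosure_eq φ X j2 N']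
  refine invar φ hG M' N' Z' f' h' s' t' hst'
    (fun _ => none) (fun _ => none) _ _
    (fun _ _ hx => by cases hx) (fun _ _ hx => by cases hx) ?_
  intro X' hX' M'' N'' hreach s'' t'' hb''
  have hXX : X' = X := Finset.mem_singleton.mp (hsub hX')
  subst hXX
  simp only [Function.update_self, oval, Option.elim]
  rcases syncReach_cases hreach with heq | ⟨hd1, hd2⟩
  · have h1 : M'' = M' := congrArg Prod.fst heq
    have h2 : N'' = N' := congrArg Prod.snd heq
    rw [h1, h2, dif_neg (not_transGen_isChild_self M'),
      dif_neg (not_transGen_isChild_self N')]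
    simp
  · rw [dif_pos hd1, dif_pos hd2]
    exact xiRel φ X' hG hsub j1 j2 M'' N'' s'' t'' hb''
termination_by (sizeOf φ, 1, M')

end

end GKM

namespace GKM

theorem goodEnv_rel {W P C : Type} {j : ℕ → Option (GKM W P C → Set W)}
    (hj : GoodEnv j) : ∀ (X : ℕ) (F : GKM W P C → Set W), j X = some F →
      ∀ (M' N' : GKM W P C) (s' t' : W), Bisim M' s' N' t' →
        (s' ∈ F M' ↔ t' ∈ F N') := by
  induction hj with
  | nil => intro X F hF; cases hF
  | @cons j X ψ hj hsent ih =>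
    intro X' F hF M' N' s' t' hb
    by_cases hXX : X' = X
    · subst hXX
      rw [Function.update_self] at hF
      injection hF with hF; subst hF
      obtain ⟨-, hffv, -, -, hGψ⟩ := hsent
      exact xiRel ψ X' hGψ (ffv_of_xi_closed hffv) j j M' N' s' t' hb
    · rw [Function.update_of_ne hXX] at hF
      exact ih X' F hF M' N' s' t' hb

end GKM
/-- strengthened invariance lemma for intermediate stages of
evaluation: if `(M,s)` and `(N,t)` are bisimilar via `(Z,f)` with `Z s t`, the
model-variable interpretations `i` and `k` are `f((s,t))`-related, the
formula-variable environment `j` arises from binding sentences, and `φ` is an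
admissible intermediate-stage formula, then `s ∈ ⟦φ⟧^M_{i,j} ↔ t ∈ ⟦φ⟧^N_{k,j}`. -/
theorem stmt11 {W P C : Type} (M N : GKM W P C)
    (Z : W → W → Prop) (f : W → W → M.Idx → N.Idx → Prop)
    (h : GKM.IsBisim M N Z f) (s t : W) (hst : Z s t)
    (i : ℕ → Option M.Idx) (k : ℕ → Option N.Idx)
    (j : ℕ → Option (GKM W P C → Set W)) (hj : GKM.GoodEnv j)
    (hik : ∀ (x : ℕ) (a : M.Idx), i x = some a → ∃ b, k x = some b ∧ f s t a b)
    (hki : ∀ (x : ℕ) (b : N.Idx), k x = some b → ∃ a, i x = some a ∧ f s t a b)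
    (φ : Fm P C) (hG : φ.Good)
    (hfmv : ∀ x ∈ φ.fmv, (i x).isSome)
    (hffv : ∀ X ∈ φ.ffv, (j X).isSome) :
    (s ∈ GKM.eval φ M i j ↔ t ∈ GKM.eval φ N k j) := by
  refine GKM.invar φ hG M N Z f h s t hst i k j j hik hki ?_
  intro X hX M' N' hreach s' t' hb
  cases hjX : j X with
  | none => simp [GKM.oval, hjX]
  | some F =>
    simp only [GKM.oval, hjX, Option.elim]
    exact GKM.goodEnv_rel hj X F hjX M' N' s' t' hb
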